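/- arXiv:1506.06872 — 4 statements merged into one kernel-verified Lean document; each statement's English description precedes it below -/
import Mathlib

section
/- Let X be a compact metric space, f : X → X continuous, and L = ω_f(x) an ω-limit set. If F is a nonempty proper closed subset of L, then the closure of f(L \ F) intersects F. -/
open Set Filter

/-- The ω-limit set of `x` under `f`. -/
def omegaSet {X : Type*} [TopologicalSpace X] (f : X → X) (x : X) : Set X :=
  ⋂ n : ℕ, closure {y | ∃ k ≥ n, f^[k] x = y}

open Metric

lemma memL_iff {X : Type*} [MetricSpace X] (f : X → X) (x y : X) :
    y ∈ omegaSet f x ↔ ∀ n : ℕ, ∀ ε > (0:ℝ), ∃ k ≥ n, dist (f^[k] x) y < ε := by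
  simp only [omegaSet, mem_iInter, Metric.mem_closure_iff, mem_setOf_eq]
  constructor
  · intro h n ε hε
    obtain ⟨b, ⟨k, hk, hb⟩, hd⟩ := h n ε hε
    exact ⟨k, hk, by rw [hb, dist_comm]; exact hd⟩
  · intro h n ε hε
    obtain ⟨k, hk, hd⟩ := h n ε hε
    exact ⟨f^[k] x, ⟨k, hk, rfl⟩, by rw [dist_comm]; exact hd⟩

lemma subseq_mem_L {X : Type*} [MetricSpace X] (f : X → X) (x y : X) (φ : ℕ → ℕ)
    (hφ : Tendsto φ atTop atTop)
    (hy : Tendsto (fun n => f^[φ n] x) atTop (nhds y)) : y ∈ omegaSet f x := by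
  rw [memL_iff]
  intro n ε hε
  have h1 : ∀ᶠ m in atTop, φ m ≥ n := hφ.eventually_ge_atTop n
  have h2 : ∀ᶠ m in atTop, dist (f^[φ m] x) y < ε :=
    (Metric.tendsto_nhds.mp hy) ε hε
  obtain ⟨m, hm1, hm2⟩ := (h1.and h2).exists
  exact ⟨φ m, hm1, hm2⟩

theorem stmt0 {X : Type*} [MetricSpace X] [CompactSpace X] (f : X → X)
    (hf : Continuous f) (x : X) (F : Set X)
    (hFL : F ⊆ omegaSet f x) (hne : F.Nonempty) (hcl : IsClosed F)
    (hprop : F ≠ omegaSet f x) :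
    (closure (f '' (omegaSet f x \ F)) ∩ F).Nonempty := by
  classical
  set L := omegaSet f x with hL
  -- p ∈ L \ F
  obtain ⟨p, hpL, hpF⟩ : ∃ p ∈ L, p ∉ F := by
    by_contra h
    push_neg at h
    exact hprop (le_antisymm hFL h)
  obtain ⟨q, hqF⟩ := id hne
  set δ := infDist p F with hδdef
  have hδ : 0 < δ := (hcl.notMem_iff_infDist_pos hne).mp hpF
  -- transition times
  have key : ∀ ε : ℝ, 0 < ε → ε < δ → ∀ N : ℕ, ∃ t ≥ N,
      ε ≤ infDist (f^[t] x) F ∧ infDist (f^[t+1] x) F < ε := by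
    intro ε hε hεδ N
    obtain ⟨a, haN, ha⟩ := (memL_iff f x p).mp hpL N (δ - ε) (by linarith)
    have hafar : ε < infDist (f^[a] x) F := by
      have := infDist_le_infDist_add_dist (x := p) (y := f^[a] x) (s := F)
      rw [dist_comm] at this
      linarith [this]
    obtain ⟨b, hba, hb⟩ := (memL_iff f x q).mp (hFL hqF) (a + 1) ε hε
    have hbnear : infDist (f^[b] x) F < ε :=
      lt_of_le_of_lt (infDist_le_dist_of_mem hqF) hb
    have hPb : a < b ∧ infDist (f^[b] x) F < ε := ⟨hba, hbnear⟩
    set P := fun s => a < s ∧ infDist (f^[s] x) F < ε with hP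
    have hex : ∃ s, P s := ⟨b, hPb⟩
    set s := Nat.find hex with hs
    have hsP : P s := Nat.find_spec hex
    have hs1 : 1 ≤ s := by have := hsP.1; omega
    refine ⟨s - 1, le_trans haN (by omega), ?_, ?_⟩
    · rcases eq_or_lt_of_le (Nat.le_sub_one_of_lt hsP.1) with heq | hlt
      · rw [← heq]; exact le_of_lt hafar
      · by_contra hc
        push_neg at hc
        have : P (s - 1) := ⟨hlt, hc⟩
        exact absurd this (Nat.find_min hex (by omega))
    · have : s - 1 + 1 = s := by omega
      rw [this]; exact hsP.2
  -- for each small ε, a point of L \ F whose image is ε-close to F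
  have key2 : ∀ ε : ℝ, 0 < ε → ε < δ → ∃ y ∈ L, y ∉ F ∧ infDist (f y) F ≤ ε := by
    intro ε hε hεδ
    choose t ht htfar htnear using key ε hε hεδ
    have htt : Tendsto t atTop atTop := tendsto_atTop_mono ht tendsto_id
    obtain ⟨y, -, ψ, hψ, hyt⟩ :=
      isCompact_univ.tendsto_subseq (x := fun n => f^[t n] x) (fun n => mem_univ _)
    have hφ : Tendsto (t ∘ ψ) atTop atTop := htt.comp hψ.tendsto_atTop
    have hyL : y ∈ L := subseq_mem_L f x y (t ∘ ψ) hφ hyt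
    have hinfy : ε ≤ infDist y F := by
      have hcont : Tendsto (fun n => infDist (f^[t (ψ n)] x) F) atTop (nhds (infDist y F)) :=
        ((continuous_infDist_pt F).continuousAt.tendsto).comp hyt
      exact ge_of_tendsto hcont (Eventually.of_forall fun n => htfar (ψ n))
    have hyF : y ∉ F := fun h => by
      rw [infDist_zero_of_mem h] at hinfy; linarith
    have hfy : Tendsto (fun n => f^[t (ψ n) + 1] x) atTop (nhds (f y)) := by
      have := (hf.continuousAt.tendsto).comp hyt
      simpa [Function.comp_def, Function.iterate_succ_apply'] using this
    have hinffy : infDist (f y) F ≤ ε := by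
      have hcont : Tendsto (fun n => infDist (f^[t (ψ n) + 1] x) F) atTop
          (nhds (infDist (f y) F)) :=
        ((continuous_infDist_pt F).continuousAt.tendsto).comp hfy
      exact le_of_tendsto hcont (Eventually.of_forall fun n => le_of_lt (htnear (ψ n)))
    exact ⟨y, hyL, hyF, hinffy⟩
  -- take ε_m = δ/(m+2) and extract a limit
  have hεm : ∀ m : ℕ, 0 < δ / (m + 2) ∧ δ / (m + 2) < δ := by
    intro m
    have h0 : (0:ℝ) ≤ m := Nat.cast_nonneg m
    constructor
    · positivity
    · rw [div_lt_iff₀ (by linarith)]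
      nlinarith
  choose y hyL hyF hynear using fun m : ℕ => key2 (δ / (m + 2)) (hεm m).1 (hεm m).2
  obtain ⟨z, -, ψ, hψ, hzt⟩ :=
    isCompact_univ.tendsto_subseq (x := fun m => f (y m)) (fun m => mem_univ _)
  refine ⟨z, ?_, ?_⟩
  · exact mem_closure_of_tendsto hzt
      (Eventually.of_forall fun m => mem_image_of_mem f ⟨hyL (ψ m), hyF (ψ m)⟩)
  · rw [hcl.mem_iff_infDist_zero hne]
    have hcont : Tendsto (fun m => infDist (f (y (ψ m))) F) atTop (nhds (infDist z F)) :=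
      ((continuous_infDist_pt F).continuousAt.tendsto).comp hzt
    have hbd : ∀ m : ℕ, infDist (f (y (ψ m))) F ≤ δ / (m + 2) := by
      intro m
      refine le_trans (hynear (ψ m)) ?_
      have h1 : m ≤ ψ m := hψ.le_apply
      have hle : (m:ℝ) + 2 ≤ (ψ m : ℝ) + 2 := by
        have : (m:ℝ) ≤ ψ m := by exact_mod_cast h1
        linarith
      exact div_le_div_of_nonneg_left (le_of_lt hδ) (by positivity) hle
    have htend : Tendsto (fun m : ℕ => δ / ((m:ℝ) + 2)) atTop (nhds 0) := by
      have h2 : Tendsto (fun m : ℕ => ((m:ℝ) + 2)) atTop atTop :=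
        tendsto_natCast_atTop_atTop.atTop_add tendsto_const_nhds
      exact Tendsto.div_atTop tendsto_const_nhds h2
    have hzero : Tendsto (fun m => infDist (f (y (ψ m))) F) atTop (nhds 0) :=
      squeeze_zero (fun m => infDist_nonneg) hbd htend
    exact tendsto_nhds_unique hcont hzero
end

section
/- Let X be a compact metric space, f : X → X continuous, and L an ω-limit set of f. If G is a nonempty subset of L that is open in the subspace topology of L and satisfies f(cl(G)) ⊆ G (closure taken in L), then G = L. -/
open Set Filter

theorem stmt1 {X : Type*} [MetricSpace X] [CompactSpace X] (f : X → X)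
    (hf : Continuous f) (x : X) (G : Set X)
    (hGL : G ⊆ omegaSet f x) (hGne : G.Nonempty)
    (hopen : ∃ U : Set X, IsOpen U ∧ G = U ∩ omegaSet f x)
    (hsub : f '' (closure G ∩ omegaSet f x) ⊆ G) :
    G = omegaSet f x := by
  classical
  obtain ⟨U, hU, hGU⟩ := hopen
  set L := omegaSet f x with hLdef
  set tail : ℕ → Set X := fun n => {y | ∃ k ≥ n, f^[k] x = y} with htail
  have hLmem : ∀ y, y ∈ L ↔ ∀ n, y ∈ closure (tail n) := fun y => mem_iInter
  have hLclosed : IsClosed L := isClosed_iInter fun n => isClosed_closure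
  have hKclosed : IsClosed (closure G ∩ L) := isClosed_closure.inter hLclosed
  have hKU : closure G ∩ L ⊆ f ⁻¹' U := by
    intro y hy
    have h := hsub ⟨y, hy, rfl⟩
    rw [hGU] at h
    exact h.1
  obtain ⟨V, hVopen, hKV, hVU⟩ :=
    normal_exists_closure_subset hKclosed (hU.preimage hf) hKU
  have hGV : G ⊆ V := fun g hg => hKV ⟨subset_closure hg, hGL hg⟩
  have hfclV : IsCompact (f '' closure V) := (isClosed_closure.isCompact).image hf
  have hfclVU : f '' closure V ⊆ U := by
    rintro _ ⟨y, hy, rfl⟩; exact hVU hy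
  by_cases hcase : ∃ N, ∀ k ≥ N, f^[k] x ∈ V
  · obtain ⟨N, hN⟩ := hcase
    refine Subset.antisymm hGL ?_
    intro y hy
    rw [hGU]
    refine ⟨?_, hy⟩
    have h1 : tail (N + 1) ⊆ f '' closure V := by
      rintro _ ⟨k, hk, rfl⟩
      obtain ⟨j, rfl⟩ : ∃ j, k = j + 1 := ⟨k - 1, by omega⟩
      exact ⟨f^[j] x, subset_closure (hN j (by omega)),
        (Function.iterate_succ_apply' f j x).symm⟩
    have h2 : y ∈ closure (tail (N + 1)) := (hLmem y).1 hy (N + 1)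
    have h3 : y ∈ f '' closure V := by
      have := (closure_mono h1) h2
      rwa [hfclV.isClosed.closure_eq] at this
    exact hfclVU h3
  · exfalso
    push_neg at hcase
    -- orbit visits V at arbitrarily large times
    obtain ⟨g, hg⟩ := hGne
    have hvisit : ∀ N, ∃ k ≥ N, f^[k] x ∈ V := by
      intro N
      have hgc : g ∈ closure (tail N) := (hLmem g).1 (hGL hg) N
      obtain ⟨y, hyV, hyT⟩ := mem_closure_iff_nhds.1 hgc _ (hVopen.mem_nhds (hGV hg))
      obtain ⟨k, hk, rfl⟩ := hyT
      exact ⟨k, hk, hyV⟩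
    -- escape points
    set C := f '' closure V ∩ Vᶜ with hC
    have hCclosed : IsClosed C := hfclV.isClosed.inter hVopen.isClosed_compl
    have hesc : ∀ N, ∃ m ≥ N, f^[m] x ∈ C := by
      intro N
      obtain ⟨k, hk, hkV⟩ := hvisit N
      have hex : ∃ j, f^[k + 1 + j] x ∉ V := by
        obtain ⟨m, hm, hmV⟩ := hcase (k + 1)
        exact ⟨m - (k + 1), by rwa [show k + 1 + (m - (k + 1)) = m by omega]⟩
      set j0 := Nat.find hex with hj0
      have hout : f^[k + 1 + j0] x ∉ V := Nat.find_spec hex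
      have hprev : f^[k + j0] x ∈ V := by
        rcases Nat.eq_zero_or_pos j0 with h0 | h0
        · rwa [h0, add_zero]
        · have := Nat.find_min hex (show j0 - 1 < j0 by omega)
          rw [not_not] at this
          rwa [show k + j0 = k + 1 + (j0 - 1) by omega]
      refine ⟨k + 1 + j0, by omega, ?_, hout⟩
      exact ⟨f^[k + j0] x, subset_closure hprev, by
        rw [show k + 1 + j0 = (k + j0) + 1 by omega, Function.iterate_succ_apply']⟩
    -- nested compact sets
    set S : ℕ → Set X := fun n => closure (tail n) ∩ C with hS
    have hSne : ∀ n, (S n).Nonempty := by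
      intro n
      obtain ⟨m, hm, hmC⟩ := hesc n
      exact ⟨f^[m] x, subset_closure ⟨m, hm, rfl⟩, hmC⟩
    have hSclosed : ∀ n, IsClosed (S n) := fun n => isClosed_closure.inter hCclosed
    have hSmono : ∀ n, S (n + 1) ⊆ S n := by
      intro n
      apply inter_subset_inter_left
      apply closure_mono
      rintro _ ⟨k, hk, rfl⟩
      exact ⟨k, by omega, rfl⟩
    obtain ⟨w, hw⟩ := IsCompact.nonempty_iInter_of_sequence_nonempty_isCompact_isClosed
      S hSmono hSne ((hSclosed 0).isCompact) hSclosed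
    have hwL : w ∈ L := (hLmem w).2 fun n => (mem_iInter.1 hw n).1
    have hwC : w ∈ C := (mem_iInter.1 hw 0).2
    have hwG : w ∈ G := by rw [hGU]; exact ⟨hfclVU hwC.1, hwL⟩
    exact hwC.2 (hGV hwG)
end

section
/- Let σ be a permutation of {1, …, n}, let L be a compact metric space with a continuous surjection f : L → L, and suppose L is partitioned into nonempty clopen sets l₁, …, lₙ with f(lₖ) = l_{σ(k)} for all k. Then σ is an n-cycle. -/
open Set Filter Topology

lemma omegaSet_isClosed {X : Type*} [TopologicalSpace X] (f : X → X) (x : X) :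
    IsClosed (omegaSet f x) := isClosed_iInter fun _ => isClosed_closure

lemma omega_mem_dist {X : Type*} [MetricSpace X] {f : X → X} {x y : X}
    (hy : y ∈ omegaSet f x) (ε : ℝ) (hε : 0 < ε) (N : ℕ) :
    ∃ k ≥ N, dist (f^[k] x) y < ε := by
  have h := Set.mem_iInter.mp hy N
  rcases Metric.mem_closure_iff.mp h ε hε with ⟨z, ⟨k, hk, rfl⟩, hd⟩
  exact ⟨k, hk, by rwa [dist_comm]⟩

lemma omega_approx {X : Type*} [MetricSpace X] [CompactSpace X] (f : X → X) (x : X)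
    (ε : ℝ) (hε : 0 < ε) :
    ∃ N, ∀ k ≥ N, ∃ y ∈ omegaSet f x, dist (f^[k] x) y < ε := by
  by_contra h
  push_neg at h
  choose g hg hfar using h
  obtain ⟨z, _, φ, hφ, hconv⟩ := isCompact_univ.tendsto_subseq
    (fun m => Set.mem_univ (f^[g m] x))
  have hzL : z ∈ omegaSet f x := by
    refine Set.mem_iInter.mpr fun N => mem_closure_of_tendsto hconv ?_
    filter_upwards [eventually_ge_atTop N] with m hm
    exact ⟨g (φ m), le_trans (le_trans hm hφ.le_apply) (hg (φ m)), rfl⟩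
  have hdz : Tendsto (fun m => dist (f^[g (φ m)] x) z) atTop (𝓝 (dist z z)) :=
    hconv.dist tendsto_const_nhds
  have hεz : ε ≤ dist z z :=
    ge_of_tendsto hdz (Filter.Eventually.of_forall fun m => hfar (φ m) z hzL)
  rw [dist_self] at hεz
  linarith

theorem stmt7 {X : Type*} [MetricSpace X] [CompactSpace X] (f : X → X)
    (hf : Continuous f) (x : X) (n : ℕ) (hn : 1 ≤ n)
    (σ : Equiv.Perm (Fin n)) (l : Fin n → Set X)
    (hne : ∀ k, (l k).Nonempty)
    (hopen : ∀ k, ∃ U : Set X, IsOpen U ∧ l k = U ∩ omegaSet f x)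
    (hclosed : ∀ k, ∃ C : Set X, IsClosed C ∧ l k = C ∩ omegaSet f x)
    (hdisj : ∀ k j : Fin n, k ≠ j → Disjoint (l k) (l j))
    (hcover : (⋃ k, l k) = omegaSet f x)
    (hmap : ∀ k, f '' l k = l (σ k)) :
    ∀ k j : Fin n, ∃ m : ℕ, (σ ^ m) k = j := by
  intro k j
  by_contra hcon
  push_neg at hcon
  set L := omegaSet f x with hL
  have hLclosed : IsClosed L := omegaSet_isClosed f x
  have hlclosed : ∀ i, IsClosed (l i) := by
    intro i; obtain ⟨C, hC, hCe⟩ := hclosed i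
    rw [hCe]; exact hC.inter hLclosed
  have hlL : ∀ i, l i ⊆ L := by
    intro i; rw [← hcover]; exact Set.subset_iUnion l i
  set S : Set (Fin n) := {i | ∃ m : ℕ, (σ ^ m) k = i} with hSdef
  have hkS : k ∈ S := ⟨0, rfl⟩
  have hjS : j ∉ S := fun ⟨m, hm⟩ => hcon m hm
  have hSfwd : ∀ i ∈ S, σ i ∈ S := by
    rintro i ⟨m, rfl⟩
    exact ⟨m + 1, by rw [pow_succ', Equiv.Perm.mul_apply]⟩
  have hSbwd : ∀ i, σ i ∈ S → i ∈ S := by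
    rintro i ⟨m, hm⟩
    have ho : 0 < orderOf σ := orderOf_pos σ
    refine ⟨orderOf σ - 1 + m, ?_⟩
    have h1 : (σ ^ (orderOf σ - 1 + m)) k = (σ ^ (orderOf σ - 1)) ((σ ^ m) k) := by
      rw [pow_add, Equiv.Perm.mul_apply]
    rw [h1, hm]
    have h2 : (σ ^ (orderOf σ - 1)) (σ i) = (σ ^ (orderOf σ - 1) * σ) i := rfl
    rw [h2, ← pow_succ, Nat.sub_add_cancel ho, pow_orderOf_eq_one]
    rfl
  set F : Set X := ⋃ i ∈ S, l i with hF
  set G : Set X := ⋃ i ∈ Sᶜ, l i with hG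
  have hFclosed : IsClosed F := Set.Finite.isClosed_biUnion S.toFinite fun i _ => hlclosed i
  have hGclosed : IsClosed G := Set.Finite.isClosed_biUnion Sᶜ.toFinite fun i _ => hlclosed i
  have hFL : F ⊆ L := Set.iUnion₂_subset fun i _ => hlL i
  have hGL : G ⊆ L := Set.iUnion₂_subset fun i _ => hlL i
  have hFG : Disjoint F G := by
    rw [Set.disjoint_left]
    rintro p hpF hpG
    simp only [hF, hG, Set.mem_iUnion, exists_prop] at hpF hpG
    obtain ⟨i, hiS, hpi⟩ := hpF
    obtain ⟨i', hi'S, hpi'⟩ := hpG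
    exact (hdisj i i' (fun h => hi'S (h ▸ hiS))).le_bot ⟨hpi, hpi'⟩
  have hFG_union : ∀ y ∈ L, y ∈ F ∨ y ∈ G := by
    intro y hy
    rw [← hcover] at hy
    obtain ⟨i, hi⟩ := Set.mem_iUnion.mp hy
    by_cases hiS : i ∈ S
    · exact Or.inl (Set.mem_biUnion hiS hi)
    · exact Or.inr (Set.mem_biUnion hiS hi)
  have hFinv : ∀ p ∈ F, f p ∈ F := by
    intro p hp
    simp only [hF, Set.mem_iUnion, exists_prop] at hp ⊢
    obtain ⟨i, hiS, hpi⟩ := hp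
    exact ⟨σ i, hSfwd i hiS, (hmap i) ▸ Set.mem_image_of_mem f hpi⟩
  -- positive separation between F and G
  obtain ⟨δ, hδ, hthick⟩ := hFG.exists_thickenings (hFclosed.isCompact) hGclosed
  have hsep : ∀ p ∈ F, ∀ q ∈ G, δ ≤ dist p q := by
    intro p hp q hq
    by_contra hlt
    push_neg at hlt
    have h1 : q ∈ Metric.thickening δ F :=
      Metric.mem_thickening_iff.mpr ⟨p, hp, by rwa [dist_comm]⟩
    have h2 : q ∈ Metric.thickening δ G := Metric.self_subset_thickening hδ G hq
    exact hthick.le_bot ⟨h1, h2⟩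
  -- uniform continuity modulus
  obtain ⟨η, hη, hmod⟩ := Metric.uniformContinuous_iff.mp
    (CompactSpace.uniformContinuous_of_continuous hf) (δ / 3) (by linarith)
  set ε := min η (δ / 3) with hεdef
  have hεpos : 0 < ε := lt_min hη (by linarith)
  have hεη : ε ≤ η := min_le_left _ _
  have hεδ : ε ≤ δ / 3 := min_le_right _ _
  obtain ⟨N₀, hN₀⟩ := omega_approx f x ε hεpos
  -- once the orbit is ε-close to F, it stays ε-close to F
  have key : ∀ k₀, N₀ ≤ k₀ → (∃ p ∈ F, dist (f^[k₀] x) p < ε) →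
      ∀ m, k₀ ≤ m → ∃ p ∈ F, dist (f^[m] x) p < ε := by
    intro k₀ hk₀ hstart m hm
    induction m, hm using Nat.le_induction with
    | base => exact hstart
    | succ m hm ih =>
      obtain ⟨p, hpF, hpd⟩ := ih
      have hfp : f p ∈ F := hFinv p hpF
      have hd1 : dist (f^[m+1] x) (f p) < δ / 3 := by
        rw [Function.iterate_succ_apply']
        exact hmod (lt_of_lt_of_le hpd hεη)
      obtain ⟨y, hyL, hyd⟩ := hN₀ (m + 1) (le_trans hk₀ (le_trans hm (Nat.le_succ m)))
      rcases hFG_union y hyL with hyF | hyG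
      · exact ⟨y, hyF, hyd⟩
      · exfalso
        have := hsep (f p) hfp y hyG
        have htri : dist (f p) y ≤ dist (f p) (f^[m+1] x) + dist (f^[m+1] x) y :=
          dist_triangle _ _ _
        rw [dist_comm (f p) (f^[m+1] x)] at htri
        linarith
  -- the orbit comes ε-close to F at some time ≥ N₀
  obtain ⟨p₀, hp₀⟩ := hne k
  have hp₀F : p₀ ∈ F := Set.mem_biUnion hkS hp₀
  obtain ⟨k₁, hk₁, hk₁d⟩ := omega_mem_dist (hFL hp₀F) ε hεpos N₀
  -- the orbit comes close to G at some later time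
  obtain ⟨w, hw⟩ := hne j
  have hwG : G ⊆ G := le_refl G
  have hwG' : w ∈ G := Set.mem_biUnion hjS hw
  obtain ⟨m, hm, hmd⟩ := omega_mem_dist (hGL hwG') (δ / 3) (by linarith) k₁
  obtain ⟨p, hpF, hpd⟩ := key k₁ hk₁ ⟨p₀, hp₀F, hk₁d⟩ m hm
  have := hsep p hpF w hwG'
  have htri : dist p w ≤ dist p (f^[m] x) + dist (f^[m] x) w := dist_triangle _ _ _
  rw [dist_comm p (f^[m] x)] at htri
  linarith
end

section
/- Let Y ⊆ X be dendrites. Then the derived set of the endpoints of Y is contained in the derived set of the endpoints of X: E(Y)' ⊆ E(X)'. -/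
open Set Metric Filter

/-- A dendrite: a compact, connected, locally connected metric(izable) space
containing no subspace homeomorphic to the circle. -/
def IsDendrite (X : Type*) [TopologicalSpace X] : Prop :=
  CompactSpace X ∧ ConnectedSpace X ∧ LocallyConnectedSpace X ∧
    ∀ s : Set X, ¬ Nonempty (s ≃ₜ (Metric.sphere (0 : ℂ) 1 : Set ℂ))

/-- `A` is an arc from `x` to `y`: the image of an injective continuous map of `[0,1]`. -/
def IsArc {X : Type*} [TopologicalSpace X] (A : Set X) (x y : X) : Prop :=
  ∃ γ : unitInterval → X, Continuous γ ∧ Function.Injective γ ∧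
    γ 0 = x ∧ γ 1 = y ∧ A = Set.range γ

/-- `A` is either the degenerate arc `{x}` (when `x = y`) or an arc from `x` to `y`. -/
def IsArcOrPt {X : Type*} [TopologicalSpace X] (A : Set X) (x y : X) : Prop :=
  (x = y ∧ A = {x}) ∨ IsArc A x y

/-- The convex hull of a set `F` in a dendrite: the intersection of all
subdendrites (i.e. subcontinua) of `X` containing `F`. -/
def dendriteHull {X : Type*} [TopologicalSpace X] (F : Set X) : Set X :=
  ⋂₀ {D : Set X | F ⊆ D ∧ IsClosed D ∧ IsConnected D}

/-- `x` is an endpoint of the subdendrite `D`: removing it leaves `D` connected,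
i.e. `ord(x, D) = 1`. -/
def IsEndpointOf {X : Type*} [TopologicalSpace X] (D : Set X) (x : X) : Prop :=
  x ∈ D ∧ IsConnected (D \ {x})


open Topology

section NonCut

variable {K : Type*} [TopologicalSpace K]

/-- A separation of the complement of a point `z`. -/
structure SepAt (z : K) (A B : Set K) : Prop where
  openA : IsOpen A
  openB : IsOpen B
  disj : A ∩ B = ∅
  unionEq : A ∪ B = {z}ᶜ
  neA : A.Nonempty
  neB : B.Nonempty

namespace SepAt

variable {z : K} {A B : Set K}

theorem symm (h : SepAt z A B) : SepAt z B A :=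
  ⟨h.openB, h.openA, by rw [inter_comm]; exact h.disj, by rw [union_comm]; exact h.unionEq,
    h.neB, h.neA⟩

theorem subset_compl_left (h : SepAt z A B) : A ⊆ {z}ᶜ :=
  h.unionEq ▸ subset_union_left

theorem notMem_left (h : SepAt z A B) : z ∉ A := fun hz => h.subset_compl_left hz rfl

theorem mem_right_iff (h : SepAt z A B) {x : K} : x ∈ B ↔ x ∉ A ∧ x ≠ z := by
  constructor
  · intro hx
    refine ⟨fun hA => ?_, fun hxz => h.symm.notMem_left (hxz ▸ hx)⟩
    have : x ∈ A ∩ B := ⟨hA, hx⟩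
    rw [h.disj] at this; exact this
  · rintro ⟨hA, hz⟩
    have : x ∈ A ∪ B := h.unionEq ▸ hz
    exact this.resolve_left hA

theorem compl_left (h : SepAt z A B) : Aᶜ = B ∪ {z} := by
  ext x
  simp only [mem_compl_iff, mem_union, mem_singleton_iff, h.mem_right_iff]
  by_cases hxz : x = z
  · subst hxz; simp [h.notMem_left]
  · simp [hxz]

theorem compl_union_singleton (h : SepAt z A B) : (A ∪ {z})ᶜ = B := by
  ext x
  simp only [mem_compl_iff, mem_union, mem_singleton_iff, h.mem_right_iff]
  tauto

theorem isClosed_union_singleton (h : SepAt z A B) : IsClosed (A ∪ {z}) := by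
  rw [← compl_compl (A ∪ {z}), h.compl_union_singleton]
  exact h.openB.isClosed_compl

theorem nested {w : K} {A' B' : Set K} (h : SepAt z A B) (h' : SepAt w A' B')
    (hsub : A ∪ {z} ⊆ A') : B' ∪ {w} ⊆ B := by
  have h1 : B' ∪ {w} = A'ᶜ := by
    rw [h'.compl_left]
  rw [h1, ← h.compl_union_singleton]
  exact compl_subset_compl.mpr hsub

theorem preconnected_union_singleton [PreconnectedSpace K] (h : SepAt z A B) :
    IsPreconnected (A ∪ {z}) := by
  set M := A ∪ {z} with hM
  have hzM : z ∈ M := Or.inr rfl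
  have hMclosed : IsClosed M := h.isClosed_union_singleton
  -- key claim, to apply twice by symmetry
  have key : ∀ U V : Set K, IsOpen U → IsOpen V → M ⊆ U ∪ V → (M ∩ V).Nonempty →
      z ∈ U → (M ∩ (U ∩ V)).Nonempty := by
    intro U V hU hV hcov ⟨b, hbM, hbV⟩ hzU
    by_contra hemp
    rw [not_nonempty_iff_eq_empty] at hemp
    have hzV : z ∉ V := by
      intro hzV
      have : z ∈ M ∩ (U ∩ V) := ⟨hzM, hzU, hzV⟩
      rw [hemp] at this; exact this
    have hCsopen : IsOpen (A ∩ V) := h.openA.inter hV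
    have hCs : M ∩ V = A ∩ V := by
      ext x
      simp only [hM, mem_inter_iff, mem_union, mem_singleton_iff]
      constructor
      · rintro ⟨hx | hx, hxV⟩
        · exact ⟨hx, hxV⟩
        · exact absurd (hx ▸ hxV) hzV
      · rintro ⟨hx, hxV⟩; exact ⟨Or.inl hx, hxV⟩
    have hCsclosed : IsClosed (M ∩ V) := by
      have : M ∩ V = M ∩ Uᶜ := by
        ext x
        simp only [mem_inter_iff, mem_compl_iff]
        constructor
        · rintro ⟨hxM, hxV⟩
          refine ⟨hxM, fun hxU => ?_⟩
          have : x ∈ M ∩ (U ∩ V) := ⟨hxM, hxU, hxV⟩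
          rw [hemp] at this; exact this
        · rintro ⟨hxM, hxU⟩
          exact ⟨hxM, (hcov hxM).resolve_left hxU⟩
      rw [this]
      exact hMclosed.inter (isClosed_compl_iff.mpr hU)
    have hclopen : IsClopen (M ∩ V) := ⟨hCsclosed, hCs ▸ hCsopen⟩
    rcases isClopen_iff.mp hclopen with hc | hc
    · have hb : b ∈ M ∩ V := ⟨hbM, hbV⟩
      rw [hc] at hb; exact hb
    · have : z ∈ M ∩ V := hc ▸ mem_univ z
      exact hzV this.2
  intro U V hU hV hcov hUne hVne
  rcases hcov hzM with hzU | hzV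
  · exact key U V hU hV hcov hVne hzU
  · have := key V U hV hU (by rwa [union_comm]) hUne hzV
    rwa [inter_comm V U] at this

end SepAt

theorem exists_sepAt [T1Space K] {z : K} (hcon : ¬ IsPreconnected ({z}ᶜ : Set K)) :
    ∃ A B, SepAt z A B := by
  rw [IsPreconnected] at hcon
  push_neg at hcon
  obtain ⟨u, v, hu, hv, hcov, hne1, hne2, hemp⟩ := hcon
  refine ⟨{z}ᶜ ∩ u, {z}ᶜ ∩ v, ⟨isOpen_compl_singleton.inter hu, isOpen_compl_singleton.inter hv,
      ?_, ?_, hne1, hne2⟩⟩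
  · rw [← hemp]; ext x; simp only [mem_inter_iff, mem_compl_iff]; tauto
  · rw [← inter_union_distrib_left]
    exact inter_eq_left.mpr hcov

theorem SepAt.exists_noncut [CompactSpace K] [ConnectedSpace K] [T1Space K] {z : K}
    {A B : Set K} (h : SepAt z A B) : ∃ f ∈ B, IsPreconnected ({f}ᶜ : Set K) := by
  by_contra hcon
  push_neg at hcon
  -- every point of `B` is a cut point; choose oriented separations
  have hchoice : ∀ w, w ∈ B → ∃ A' B', SepAt w A' B' ∧ A ∪ {z} ⊆ A' := by
    intro w hw
    obtain ⟨A₀, B₀, hs⟩ := exists_sepAt (hcon w hw)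
    have hM : IsPreconnected (A ∪ {z}) := h.preconnected_union_singleton
    have hMsub : A ∪ {z} ⊆ A₀ ∪ B₀ := by
      rw [hs.unionEq]
      rintro x (hx | hx)
      · intro hxw
        rw [mem_singleton_iff] at hxw
        exact absurd (hxw ▸ hx) ((h.mem_right_iff.mp hw).1)
      · intro hxw
        rw [mem_singleton_iff] at hx hxw
        exact (h.mem_right_iff.mp hw).2 (hxw.symm.trans hx)
    by_cases hcase : ((A ∪ {z}) ∩ A₀).Nonempty
    · refine ⟨A₀, B₀, hs, ?_⟩
      exact hM.subset_left_of_subset_union hs.openA hs.openB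
        (disjoint_iff_inter_eq_empty.mpr hs.disj) hMsub hcase
    · refine ⟨B₀, A₀, hs.symm, ?_⟩
      rw [not_nonempty_iff_eq_empty] at hcase
      intro x hx
      rcases hMsub hx with hxA | hxB
      · have : x ∈ (A ∪ {z}) ∩ A₀ := ⟨hx, hxA⟩
        rw [hcase] at this
        exact absurd this (notMem_empty x)
      · exact hxB
  choose A' B' hsep hanch using hchoice
  -- key: if u ∈ B' w hw, then the next separation is strictly inside
  have hBB : ∀ w (hw : w ∈ B), B' w hw ∪ {w} ⊆ B := fun w hw => h.nested (hsep w hw) (hanch w hw)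
  have hstep : ∀ w (hw : w ∈ B) u (hu : u ∈ B' w hw) (huB : u ∈ B),
      B' u huB ∪ {u} ⊆ B' w hw := by
    intro w hw u hu huB
    have hM : IsPreconnected (A' w hw ∪ {w}) := (hsep w hw).preconnected_union_singleton
    have hzs : z ∈ A' w hw ∪ {w} := Or.inl (hanch w hw (Or.inr rfl))
    have hzu : z ∈ A' u huB := hanch u huB (Or.inr rfl)
    have hMsub : A' w hw ∪ {w} ⊆ A' u huB ∪ B' u huB := by
      rw [(hsep u huB).unionEq]
      rintro x (hx | hx)
      · intro hxu
        rw [mem_singleton_iff] at hxu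
        exact ((hsep w hw).mem_right_iff.mp hu).1 (hxu ▸ hx)
      · intro hxu
        rw [mem_singleton_iff] at hx hxu
        exact ((hsep w hw).mem_right_iff.mp hu).2 (hxu.symm.trans hx)
    have hsub : A' w hw ∪ {w} ⊆ A' u huB :=
      hM.subset_left_of_subset_union (hsep u huB).openA (hsep u huB).openB
        (disjoint_iff_inter_eq_empty.mpr (hsep u huB).disj) hMsub ⟨z, hzs, hzu⟩
    exact (hsep w hw).nested (hsep u huB) hsub
  -- the Zorn family
  set S : Set (Set K) := {s | ∃ w, ∃ hw : w ∈ B, s = B' w hw ∪ {w}} with hS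
  obtain ⟨w₀, hw₀⟩ := h.neB
  have hx₀ : B' w₀ hw₀ ∪ {w₀} ∈ S := ⟨w₀, hw₀, rfl⟩
  have hclosed : ∀ s ∈ S, IsClosed s := by
    rintro s ⟨w, hw, rfl⟩
    have : B' w hw ∪ {w} = (A' w hw)ᶜ := ((hsep w hw).compl_left).symm
    rw [this]
    exact (hsep w hw).openA.isClosed_compl
  have hne : ∀ s ∈ S, s.Nonempty := by rintro s ⟨w, hw, rfl⟩; exact ⟨w, Or.inr rfl⟩
  have hsubB : ∀ s ∈ S, s ⊆ B := by rintro s ⟨w, hw, rfl⟩; exact hBB w hw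
  have hzorn : ∀ c ⊆ S, IsChain (· ⊆ ·) c → c.Nonempty → ∃ lb ∈ S, ∀ s ∈ c, lb ⊆ s := by
    intro c hcS hchain hcne
    haveI : Nonempty c := hcne.to_subtype
    have hdir : DirectedOn (· ⊇ ·) c := by
      intro s hs t ht
      rcases hchain.total hs ht with hst | hts
      · exact ⟨s, hs, le_refl _, hst⟩
      · exact ⟨t, ht, hts, le_refl _⟩
    have hTne : (⋂₀ c).Nonempty :=
      IsCompact.nonempty_sInter_of_directed_nonempty_isCompact_isClosed hdir
        (fun s hs => hne s (hcS hs)) (fun s hs => (hclosed s (hcS hs)).isCompact)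
        (fun s hs => hclosed s (hcS hs))
    obtain ⟨u, hu⟩ := hTne
    obtain ⟨s₁, hs₁⟩ := hcne
    have huB : u ∈ B := hsubB s₁ (hcS hs₁) (hu s₁ hs₁)
    refine ⟨B' u huB ∪ {u}, ⟨u, huB, rfl⟩, ?_⟩
    rintro s hs
    obtain ⟨w, hw, rfl⟩ := hcS hs
    rcases (hu _ hs : u ∈ B' w hw ∪ {w}) with hu' | hu'
    · exact (hstep w hw u hu' huB).trans subset_union_left
    · rw [mem_singleton_iff] at hu'
      subst hu'
      rfl
  obtain ⟨m, -, hmmin⟩ := zorn_superset_nonempty S hzorn _ hx₀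
  obtain ⟨w₁, hw₁, rfl⟩ := hmmin.prop
  obtain ⟨v, hv⟩ := (hsep w₁ hw₁).neB
  have hvB : v ∈ B := hBB w₁ hw₁ (Or.inl hv)
  have hsub' : B' v hvB ∪ {v} ⊆ B' w₁ hw₁ := hstep w₁ hw₁ v hv hvB
  have hvS : B' v hvB ∪ {v} ∈ S := ⟨v, hvB, rfl⟩
  have heq : B' w₁ hw₁ ∪ {w₁} ⊆ B' v hvB ∪ {v} :=
    (hmmin.eq_of_subset hvS (hsub'.trans subset_union_left)).symm.subset
  have hw₁mem : w₁ ∈ B' v hvB ∪ {v} := heq (Or.inr rfl)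
  have : w₁ ∈ B' w₁ hw₁ := by
    rcases hw₁mem with hw' | hw'
    · exact hsub' (Or.inl hw')
    · rw [mem_singleton_iff] at hw'
      exact hsub' (Or.inr (mem_singleton_iff.mpr hw'))
  exact ((hsep w₁ hw₁).mem_right_iff.mp this).2 rfl

theorem exists_noncut_ne [CompactSpace K] [ConnectedSpace K] [T1Space K] (p q : K) (hq : q ≠ p) :
    ∃ f, f ≠ p ∧ IsPreconnected ({f}ᶜ : Set K) := by
  by_cases hc : IsPreconnected ({q}ᶜ : Set K)
  · exact ⟨q, hq, hc⟩
  obtain ⟨A, B, hs⟩ := exists_sepAt hc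
  by_cases hpA : p ∈ A
  · obtain ⟨f, hfB, hf⟩ := hs.exists_noncut
    refine ⟨f, fun he => ?_, hf⟩
    exact (hs.mem_right_iff.mp hfB).1 (he ▸ hpA)
  · obtain ⟨f, hfA, hf⟩ := hs.symm.exists_noncut
    exact ⟨f, fun he => hpA (he ▸ hfA), hf⟩

end NonCut

theorem exists_noncut_subset {X : Type*} [MetricSpace X] [CompactSpace X] {K : Set X}
    (hK : IsClosed K) (hKc : IsConnected K) {e c : X} (he : e ∈ K) (hc : c ∈ K) (hce : c ≠ e) :
    ∃ f ∈ K, f ≠ e ∧ IsPreconnected (K \ {f}) := by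
  haveI : CompactSpace K := isCompact_iff_compactSpace.mp hK.isCompact
  haveI : ConnectedSpace K := Subtype.connectedSpace hKc
  obtain ⟨f, hfp, hf⟩ := exists_noncut_ne (⟨e, he⟩ : K) ⟨c, hc⟩
    (fun h => hce (congrArg Subtype.val h))
  refine ⟨f.1, f.2, fun hfe => hfp (Subtype.ext hfe), ?_⟩
  have himg : Subtype.val '' ({f}ᶜ : Set K) = K \ {f.1} := by
    ext x
    simp only [mem_image, mem_compl_iff, mem_singleton_iff, mem_diff]
    constructor
    · rintro ⟨y, hy, rfl⟩
      exact ⟨y.2, fun h => hy (Subtype.ext h)⟩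
    · rintro ⟨hxK, hxf⟩
      exact ⟨⟨x, hxK⟩, fun h => hxf (congrArg Subtype.val h), rfl⟩
  rw [← himg]
  exact hf.image _ continuous_subtype_val.continuousOn

theorem ulc {X : Type*} [MetricSpace X] [CompactSpace X] [LocallyConnectedSpace X] {ε : ℝ}
    (hε : 0 < ε) :
    ∃ δ > 0, ∀ x y : X, dist x y < δ →
      ∃ K : Set X, IsPreconnected K ∧ x ∈ K ∧ y ∈ K ∧ K ⊆ ball x ε := by
  have hb : ∀ c : X, ∃ V : Set X, V ⊆ ball c (ε / 2) ∧ IsOpen V ∧ c ∈ V ∧ IsConnected V :=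
    fun c => locallyConnectedSpace_iff_subsets_isOpen_isConnected.mp ‹_› c _
      (ball_mem_nhds c (by positivity))
  choose V hVsub hVopen hVmem hVconn using hb
  obtain ⟨δ, hδ, hcov⟩ := lebesgue_number_lemma_of_metric isCompact_univ hVopen
    (fun x _ => mem_iUnion.mpr ⟨x, hVmem x⟩)
  refine ⟨δ, hδ, fun x y hxy => ?_⟩
  obtain ⟨c, hc⟩ := hcov x (mem_univ x)
  have hx : x ∈ V c := hc (mem_ball_self hδ)
  have hy : y ∈ V c := hc (by rwa [mem_ball, dist_comm])
  refine ⟨V c, (hVconn c).isPreconnected, hx, hy, fun w hw => ?_⟩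
  have h1 : dist w c < ε / 2 := mem_ball.mp (hVsub c hw)
  have h2 : dist x c < ε / 2 := mem_ball.mp (hVsub c hx)
  rw [mem_ball]
  calc dist w x ≤ dist w c + dist c x := dist_triangle _ _ _
    _ < ε / 2 + ε / 2 := by rw [dist_comm c x]; exact add_lt_add h1 h2
    _ = ε := by ring

theorem stmt15 {X : Type*} [MetricSpace X] (hX : IsDendrite X)
    (Y : Set X) (hY : IsDendrite Y) :
    derivedSet {x : X | IsEndpointOf Y x} ⊆ derivedSet {x : X | IsEndpointOf Set.univ x} := by
  classical
  obtain ⟨hXcomp, hXconn, hXlc, -⟩ := hX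
  haveI := hXcomp; haveI := hXconn; haveI := hXlc
  intro z hz
  rw [mem_derivedSet, accPt_iff_nhds] at hz
  by_contra hzX
  rw [mem_derivedSet, accPt_iff_nhds] at hzX
  push_neg at hzX
  obtain ⟨W, hW, hWsub⟩ := hzX
  obtain ⟨ε, hε, hballW⟩ := Metric.mem_nhds_iff.mp hW
  obtain ⟨δ, hδ, hulc⟩ := ulc (X := X) (show (0:ℝ) < ε / 4 by linarith)
  set r : ℝ := min (δ / 2) (ε / 4) with hrdef
  have hr : 0 < r := lt_min (by linarith) (by linarith)
  have hrε : r ≤ ε / 4 := min_le_right _ _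
  -- there are infinitely many endpoints of `Y` near `z`
  set T : Set X := ball z r ∩ ({x | IsEndpointOf Y x} \ {z}) with hTdef
  have hTinf : T.Infinite := by
    intro hfin
    have hUopen : IsOpen (ball z r \ T) := isOpen_ball.sdiff hfin.isClosed
    have hU : (ball z r \ T) ∈ 𝓝 z :=
      hUopen.mem_nhds ⟨mem_ball_self hr, fun hT => hT.2.2 rfl⟩
    obtain ⟨y, ⟨hyU, hyE⟩, hyz⟩ := hz _ hU
    exact hyU.2 ⟨hyU.1, hyE, hyz⟩
  set em := Set.Infinite.natEmbedding T hTinf with hemdef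
  set e : ℕ → X := fun n => (em n : X) with hedef
  have heT : ∀ n, e n ∈ T := fun n => (em n).2
  have he_inj : Function.Injective e := fun a b hab => em.injective (Subtype.ext hab)
  have heY : ∀ n, IsEndpointOf Y (e n) := fun n => (heT n).2.1
  have henz : ∀ n, e n ≠ z := fun n h => (heT n).2.2 h
  have heball : ∀ n, dist (e n) z < r := fun n => mem_ball.mp (heT n).1
  -- no `e n` is an endpoint of `X`
  have hWz : ∀ x : X, dist x z < ε → IsEndpointOf (univ : Set X) x → x = z := by
    intro x hx hxE
    exact hWsub x ⟨hballW (mem_ball.mpr hx), hxE⟩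
  have heX : ∀ n, ¬ IsPreconnected ({e n}ᶜ : Set X) := by
    intro n hpre
    have hE : IsEndpointOf (univ : Set X) (e n) := by
      refine ⟨mem_univ _, ?_⟩
      rw [← compl_eq_univ_diff]
      exact ⟨⟨z, mem_compl_singleton_iff.mpr (henz n).symm⟩, hpre⟩
    exact henz n (hWz (e n) (lt_of_lt_of_le (heball n) (by linarith)) hE)
  -- for each `n` pick the separation of `X \ {e n}` with `Y` on the `D` side
  have hsepn : ∀ n : ℕ, ∃ C D : Set X, SepAt (e n) C D ∧ Y \ {e n} ⊆ D := by
    intro n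
    obtain ⟨A, B, hs⟩ := exists_sepAt (heX n)
    have hYc : IsPreconnected (Y \ {e n}) := (heY n).2.isPreconnected
    have hYsub : Y \ {e n} ⊆ A ∪ B := by
      rw [hs.unionEq]; exact fun x hx => hx.2
    by_cases hcase : ((Y \ {e n}) ∩ A).Nonempty
    · exact ⟨B, A, hs.symm, hYc.subset_left_of_subset_union hs.openA hs.openB
        (disjoint_iff_inter_eq_empty.mpr hs.disj) hYsub hcase⟩
    · exact ⟨A, B, hs, fun x hx => (hYsub hx).resolve_left (fun hA => hcase ⟨x, hx, hA⟩)⟩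
  choose C D hsep hYD using hsepn
  -- `C n` is disjoint from `Y`
  have hCY : ∀ n, ∀ x, x ∈ C n → x ∉ Y := by
    intro n x hxC hxY
    have hxe : x ≠ e n := fun h => (hsep n).notMem_left (h ▸ hxC)
    have hmem : x ∈ C n ∩ D n := ⟨hxC, hYD n ⟨hxY, hxe⟩⟩
    rw [(hsep n).disj] at hmem; exact hmem
  -- the `C n` are pairwise disjoint
  have hdisj : ∀ m n : ℕ, m ≠ n → ∀ x, x ∈ C m → x ∉ C n := by
    intro m n hmn
    have hemn : e m ≠ e n := fun h => hmn (he_inj h)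
    have hM : IsPreconnected (C m ∪ {e m}) := (hsep m).preconnected_union_singleton
    have hMsub : C m ∪ {e m} ⊆ C n ∪ D n := by
      rw [(hsep n).unionEq]
      rintro x (hx | hx)
      · intro hxe
        rw [mem_singleton_iff] at hxe
        exact hCY m x hx (hxe ▸ (heY n).1)
      · rw [mem_singleton_iff] at hx
        subst hx
        intro hxe
        exact hemn (mem_singleton_iff.mp hxe)
    have hMD : C m ∪ {e m} ⊆ D n := by
      refine hM.subset_left_of_subset_union (hsep n).openB (hsep n).openA
        (disjoint_iff_inter_eq_empty.mpr (by rw [inter_comm]; exact (hsep n).disj))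
        (by rwa [union_comm (C n) (D n)] at hMsub) ⟨e m, Or.inr rfl, hYD n ⟨(heY m).1, hemn⟩⟩
    intro x hxm hxn
    have hmem : x ∈ C n ∩ D n := ⟨hxn, hMD (Or.inl hxm)⟩
    rw [(hsep n).disj] at hmem; exact hmem
  -- inside each `C n` there is an endpoint of `X`
  have hfex : ∀ n : ℕ, ∃ f, f ∈ C n ∧ IsEndpointOf (univ : Set X) f := by
    intro n
    have hKcl : IsClosed (C n ∪ {e n}) := (hsep n).isClosed_union_singleton
    have hKconn : IsConnected (C n ∪ {e n}) :=
      ⟨⟨e n, Or.inr rfl⟩, (hsep n).preconnected_union_singleton⟩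
    obtain ⟨c, hc⟩ := (hsep n).neA
    have hce : c ≠ e n := fun h => (hsep n).notMem_left (h ▸ hc)
    obtain ⟨f, hfK, hfe, hfpre⟩ := exists_noncut_subset hKcl hKconn
      (Or.inr rfl : e n ∈ C n ∪ {e n}) (Or.inl hc) hce
    have hfC : f ∈ C n := by
      rcases hfK with h | h
      · exact h
      · exact absurd (mem_singleton_iff.mp h) hfe
    refine ⟨f, hfC, mem_univ f, ?_⟩
    have hset : univ \ {f} = (D n ∪ {e n}) ∪ ((C n ∪ {e n}) \ {f}) := by
      ext x
      simp only [mem_diff, mem_univ, true_and, mem_union, mem_singleton_iff]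
      constructor
      · intro hxf
        by_cases hxe : x = e n
        · exact Or.inl (Or.inr hxe)
        · have hx : x ∈ C n ∪ D n := by
            rw [(hsep n).unionEq]
            exact fun h => hxe (mem_singleton_iff.mp h)
          rcases hx with h | h
          · exact Or.inr ⟨Or.inl h, hxf⟩
          · exact Or.inl (Or.inl h)
      · rintro ((h | h) | ⟨h, hxf⟩)
        · intro hxf
          subst hxf
          have hmem : x ∈ C n ∩ D n := ⟨hfC, h⟩
          rw [(hsep n).disj] at hmem; exact hmem
        · intro hxf
          subst hxf
          exact hfe h
        · exact hxf
    rw [hset]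
    refine ⟨⟨e n, Or.inl (Or.inr rfl)⟩, ?_⟩
    exact IsPreconnected.union (e n) (Or.inr rfl)
      ⟨Or.inr rfl, fun h => hfe (mem_singleton_iff.mp h).symm⟩
      (hsep n).symm.preconnected_union_singleton hfpre
  choose f hfC hfE using hfex
  have hfinj : Function.Injective f := by
    intro a b hab
    by_contra hne
    exact hdisj a b hne (f a) (hfC a) (by rw [hab]; exact hfC b)
  have hfar : ∀ n, f n ≠ z → ¬ dist (f n) z < ε := by
    intro n hnz hlt
    exact hnz (hWsub (f n) ⟨hballW (mem_ball.mpr hlt), hfE n⟩)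
  obtain ⟨x, φ, hφ, hconv⟩ := CompactSpace.tendsto_subseq f
  obtain ⟨N, hN⟩ := Metric.tendsto_atTop.mp hconv (δ / 2) (by linarith)
  have hone : ∀ i j : ℕ, i ≠ j → f (φ i) = z → f (φ j) = z → False := by
    intro i j hij h1 h2
    exact hij (hφ.injective (hfinj (h1.trans h2.symm)))
  obtain ⟨i, j, hNi, hNj, hij, hine, hjne⟩ :
      ∃ i j : ℕ, N ≤ i ∧ N ≤ j ∧ i < j ∧ f (φ i) ≠ z ∧ f (φ j) ≠ z := by
    by_cases h0 : f (φ N) = z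
    · exact ⟨N + 1, N + 2, by omega, by omega, by omega,
        fun h => hone (N + 1) N (by omega) h h0,
        fun h => hone (N + 2) N (by omega) h h0⟩
    · by_cases h1 : f (φ (N + 1)) = z
      · exact ⟨N, N + 2, le_refl N, by omega, by omega, h0,
          fun h => hone (N + 2) (N + 1) (by omega) h h1⟩
      · exact ⟨N, N + 1, le_refl N, by omega, by omega, h0, h1⟩
  have hnm : φ i ≠ φ j := (hφ hij).ne
  have hdistnm : dist (f (φ i)) (f (φ j)) < δ := by
    have h1 : dist (f (φ i)) x < δ / 2 := hN i hNi
    have h2 : dist (f (φ j)) x < δ / 2 := hN j hNj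
    calc dist (f (φ i)) (f (φ j)) ≤ dist (f (φ i)) x + dist x (f (φ j)) := dist_triangle _ _ _
      _ < δ / 2 + δ / 2 := add_lt_add h1 (by rwa [dist_comm] at h2)
      _ = δ := by ring
  obtain ⟨Kc, hKp, hKn, hKm, hKball⟩ := hulc (f (φ i)) (f (φ j)) hdistnm
  have henK : e (φ i) ∈ Kc := by
    by_contra hne
    have hKsub : Kc ⊆ C (φ i) ∪ D (φ i) := by
      rw [(hsep (φ i)).unionEq]
      exact fun w hw hwe => hne (mem_singleton_iff.mp hwe ▸ hw)
    have hKC : Kc ⊆ C (φ i) := hKp.subset_left_of_subset_union (hsep (φ i)).openA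
      (hsep (φ i)).openB (disjoint_iff_inter_eq_empty.mpr (hsep (φ i)).disj) hKsub
      ⟨f (φ i), hKn, hfC (φ i)⟩
    exact hdisj (φ i) (φ j) hnm (f (φ j)) (hKC hKm) (hfC (φ j))
  have h1 : dist (e (φ i)) (f (φ i)) < ε / 4 := mem_ball.mp (hKball henK)
  have h2 : dist (e (φ i)) z < ε / 4 := lt_of_lt_of_le (heball (φ i)) hrε
  have hlt : dist (f (φ i)) z < ε := by
    calc dist (f (φ i)) z ≤ dist (f (φ i)) (e (φ i)) + dist (e (φ i)) z := dist_triangle _ _ _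
      _ < ε / 4 + ε / 4 := add_lt_add (by rwa [dist_comm] at h1) h2
      _ ≤ ε := by linarith
  exact hfar (φ i) hine hlt
end
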